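/- arXiv:2004.10807 — 4 statements merged into one kernel-verified Lean document; each statement's English description precedes it below -/
import Mathlib

section
/- The maps I01 and I10 satisfy the identities I01∘d0 − d1∘I01 = (−x0 + x1 + x2 − x3)·s01 and I10∘d1 − d0∘I10 = (x0 − x1 − x2 + x3)·s10. -/
noncomputable section

/-- The base ring `R = ℤ[x0, x1, x2, x3]`. -/
abbrev RR : Type := MvPolynomial (Fin 4) ℤ

def x0 : RR := MvPolynomial.X 0
def x1 : RR := MvPolynomial.X 1
def x2 : RR := MvPolynomial.X 2
def x3 : RR := MvPolynomial.X 3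

/-- `θ = x1 − x2 + x3 − x0`. -/
def th : RR := x1 - x2 + x3 - x0

/-- The potential `w = (x0 − x2)·(x1 − x3)·θ`. -/
def ww : RR := (x0 - x2) * (x1 - x3) * th

/-- The `R`-linear map on `R × R` sending `(x, y) ↦ (p·y, q·x)`; with respect to the
basis `u = (1,0)`, `v = (0,1)` it sends `u ↦ q·v` and `v ↦ p·u`. -/
def od (p q : RR) : (RR × RR) →ₗ[RR] (RR × RR) :=
  LinearMap.prod (p • LinearMap.snd RR RR RR) (q • LinearMap.fst RR RR RR)

/-- The differential of `C(D0)`: `d0 u0 = (x0 − x2)·v0`, `d0 v0 = (x1 − x3)·θ·u0`. -/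
def d0 : (RR × RR) →ₗ[RR] (RR × RR) := od ((x1 - x3) * th) (x0 - x2)

/-- The differential of `C(D1)`: `d1 u1 = (x1 − x3)·v1`, `d1 v1 = (x0 − x2)·θ·u1`. -/
def d1 : (RR × RR) →ₗ[RR] (RR × RR) := od ((x0 - x2) * th) (x1 - x3)

/-- The saddle map `s01 : C(D0) → C(D1)`: `s01 u0 = −v1`, `s01 v0 = θ·u1`. -/
def s01 : (RR × RR) →ₗ[RR] (RR × RR) := od th (-1)

/-- The saddle map `s10 : C(D1) → C(D0)`: `s10 u1 = −v0`, `s10 v1 = θ·u0`. -/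
def s10 : (RR × RR) →ₗ[RR] (RR × RR) := od th (-1)

/-- The map `I01 : C(D0) → C(D1)`: `I01 u0 = u1`, `I01 v0 = v1`. -/
def I01 : (RR × RR) →ₗ[RR] (RR × RR) := LinearMap.id

/-- The map `I10 : C(D1) → C(D0)`: `I10 u1 = u0`, `I10 v1 = v0`. -/
def I10 : (RR × RR) →ₗ[RR] (RR × RR) := LinearMap.id

theorem od_sub (p q p' q' : RR) : od p q - od p' q' = od (p - p') (q - q') := by
  ext ⟨x, y⟩ <;> simp [od]

theorem smul_od (c p q : RR) : c • od p q = od (c * p) (c * q) := by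
  ext ⟨x, y⟩ <;> simp [od]

theorem d0_sub_d1 : d0 - d1 = (-x0 + x1 + x2 - x3) • s01 := by
  rw [d0, d1, s01, od_sub, smul_od, th]
  congr 1 <;> ring

/-- `I01 ∘ d0 − d1 ∘ I01 = (−x0 + x1 + x2 − x3) • s01` and
`I10 ∘ d1 − d0 ∘ I10 = (x0 − x1 − x2 + x3) • s10`. -/
theorem stmt_6 :
    I01 ∘ₗ d0 - d1 ∘ₗ I01 = (-x0 + x1 + x2 - x3) • s01 ∧
    I10 ∘ₗ d1 - d0 ∘ₗ I10 = (x0 - x1 - x2 + x3) • s10 := by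
  simp only [I01, I10, LinearMap.comp_id, LinearMap.id_comp]
  refine ⟨d0_sub_d1, ?_⟩
  calc d1 - d0 = -((-x0 + x1 + x2 - x3) • s01) := by rw [← d0_sub_d1, neg_sub]
    _ = (x0 - x1 - x2 + x3) • s10 := by
      rw [show x0 - x1 - x2 + x3 = -(-x0 + x1 + x2 - x3) by ring]
      exact (neg_smul _ _).symm

end
end

section
/- Multiplication by x0 − x1 + x2 − x3 is null-homotopic on the crossing complex C(D+): the map H : C(D+) → C(D+) given by H(c0, c1) = (−s10 c1, 0) satisfies H∘D+ + D+∘H = (x0 − x1 + x2 − x3)·id. -/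
noncomputable section

/-- The first/second projections of `C0 × C1`. -/
def pr1 : ((RR × RR) × (RR × RR)) →ₗ[RR] (RR × RR) := LinearMap.fst RR (RR × RR) (RR × RR)
def pr2 : ((RR × RR) × (RR × RR)) →ₗ[RR] (RR × RR) := LinearMap.snd RR (RR × RR) (RR × RR)

/-- The differential of `C(D+) = C0 × C1`: `D+ (c0, c1) = (d0 c0, −s01 c0 + d1 c1)`. -/
def Dplus : ((RR × RR) × (RR × RR)) →ₗ[RR] ((RR × RR) × (RR × RR)) :=
  LinearMap.prod (d0 ∘ₗ pr1) (-(s01 ∘ₗ pr1) + d1 ∘ₗ pr2)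

/-- The homotopy `H (c0, c1) = (−s10 c1, 0)`. -/
def Hcross : ((RR × RR) × (RR × RR)) →ₗ[RR] ((RR × RR) × (RR × RR)) :=
  LinearMap.prod (-(s10 ∘ₗ pr2)) 0

/-- Multiplication by `x0 − x1 + x2 − x3` is null-homotopic on the
crossing complex `C(D+)`: `H ∘ D+ + D+ ∘ H = (x0 − x1 + x2 − x3) • id`. -/
theorem stmt_8 :
    Hcross ∘ₗ Dplus + Dplus ∘ₗ Hcross =
      (x0 - x1 + x2 - x3) •
        (LinearMap.id : ((RR × RR) × (RR × RR)) →ₗ[RR] ((RR × RR) × (RR × RR))) := by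
  apply LinearMap.ext; rintro ⟨⟨a,b⟩,⟨c,d⟩⟩
  simp [Hcross, Dplus, Hcross, d0, d1, s01, s10, pr1, pr2, od, th,
      LinearMap.prod_apply, Prod.smul_def, smul_eq_mul]
  refine ⟨⟨by ring, by ring⟩, by ring, by ring⟩

end
end

section
/- (Eliminating a loop.) The complex (M, d) satisfies d∘d = 0 and admits a special deformation retract, as R0-modules, onto the free rank-2 module N = R0 × R0 with zero differential: there exist R0-linear maps P : M → N, I : N → M, H : M → M with P∘d = 0, d∘I = 0, P∘I = id, id − I∘P = H∘d + d∘H, P∘H = 0, H∘I = 0, and H∘H = 0. (One may take I(c0, c1) = ((c0 + c1·y)·e, 0), P given by reducing the e-coefficient modulo y² − h and taking its two coefficients, and H given by H(α·e) = q·f where α = r + (y² − h)·q with deg r < 2 and H(β·f) = 0.) -/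
/-!
The Koszul differential `d (α, β) = (q β, 0)` of a monic `q` is contracted by division with
remainder: writing `α = α %ₘ q + q (α /ₘ q)`, the homotopy `H (α, β) = (0, α /ₘ q)` satisfies
`H d + d H = (α - α %ₘ q, β)`, so `id - (H d + d H)` is the projection `(α, β) ↦ (α %ₘ q, 0)`
onto the remainders. For `q = y² - h` the remainders are the polynomials `c₀ + c₁ y`, that is,
`R0 × R0`.
-/

open Polynomial LinearMap

namespace Polynomial

variable {R : Type*} [CommRing R] {q : R[X]}

theorem divByMonic_add (hq : q.Monic) (p₁ p₂ : R[X]) :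
    (p₁ + p₂) /ₘ q = p₁ /ₘ q + p₂ /ₘ q := by
  nontriviality R
  refine (div_modByMonic_unique _ (p₁ %ₘ q + p₂ %ₘ q) hq ⟨?_, ?_⟩).1
  · linear_combination modByMonic_add_div p₁ q + modByMonic_add_div p₂ q
  · exact (degree_add_le _ _).trans_lt
      (max_lt (degree_modByMonic_lt _ hq) (degree_modByMonic_lt _ hq))

theorem divByMonic_smul (hq : q.Monic) (c : R) (p : R[X]) :
    (c • p) /ₘ q = c • (p /ₘ q) := by
  nontriviality R
  refine (div_modByMonic_unique _ (c • (p %ₘ q)) hq ⟨?_, ?_⟩).1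
  · simp only [smul_eq_C_mul]
    linear_combination C c * modByMonic_add_div p q
  · exact (degree_smul_le _ _).trans_lt (degree_modByMonic_lt _ hq)

theorem modByMonic_divByMonic (hq : q.Monic) (p : R[X]) : p %ₘ q /ₘ q = 0 := by
  nontriviality R
  exact (divByMonic_eq_zero_iff hq).2 (degree_modByMonic_lt _ hq)

noncomputable def divByMonicHom (hq : q.Monic) : R[X] →ₗ[R] R[X] where
  toFun p := p /ₘ q
  map_add' := divByMonic_add hq
  map_smul' := divByMonic_smul hq

@[simp]
theorem divByMonicHom_apply (hq : q.Monic) (p : R[X]) : divByMonicHom hq p = p /ₘ q := rfl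

noncomputable def coeffPair : R[X] →ₗ[R] R × R := (lcoeff R 0).prod (lcoeff R 1)

noncomputable def ofCoeffPair : R × R →ₗ[R] R[X] := (monomial 0).coprod (monomial 1)

theorem coeffPair_comp_ofCoeffPair :
    coeffPair ∘ₗ ofCoeffPair = (LinearMap.id : R × R →ₗ[R] R × R) := by
  ext <;> simp [coeffPair, ofCoeffPair, coeff_monomial, coeff_one]

theorem ofCoeffPair_comp_coeffPair_comp_modByMonicHom (hq : q.Monic) (hq2 : q.degree ≤ 2) :
    ofCoeffPair ∘ₗ coeffPair ∘ₗ modByMonicHom q = modByMonicHom q := by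
  refine LinearMap.ext fun p => ?_
  simpa [coeffPair, ofCoeffPair, Fin.sum_univ_two] using sum_modByMonic_coeff (p := p) hq hq2

theorem degree_ofCoeffPair_lt (c : R × R) : (ofCoeffPair c).degree < 2 := by
  simp only [ofCoeffPair, coprod_apply]
  compute_degree!

theorem ofCoeffPair_modByMonic (hq : q.Monic) (hq2 : 2 ≤ q.degree) (c : R × R) :
    ofCoeffPair c %ₘ q = ofCoeffPair c := by
  nontriviality R
  exact (modByMonic_eq_self_iff hq).2 ((degree_ofCoeffPair_lt c).trans_le hq2)

theorem modByMonicHom_comp_ofCoeffPair (hq : q.Monic) (hq2 : 2 ≤ q.degree) :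
    modByMonicHom q ∘ₗ ofCoeffPair = ofCoeffPair :=
  LinearMap.ext (ofCoeffPair_modByMonic hq hq2)

theorem divByMonicHom_comp_ofCoeffPair (hq : q.Monic) (hq2 : 2 ≤ q.degree) :
    divByMonicHom hq ∘ₗ ofCoeffPair = 0 := by
  refine LinearMap.ext fun c => ?_
  rw [comp_apply, divByMonicHom_apply, ← ofCoeffPair_modByMonic hq hq2, modByMonic_divByMonic hq,
    LinearMap.zero_apply]

end Polynomial

section Koszul

variable {R : Type*} [CommRing R] (q : R[X])

noncomputable def koszulDiff : R[X] × R[X] →ₗ[R] R[X] × R[X] :=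
  inl R R[X] R[X] ∘ₗ mulLeft R q ∘ₗ snd R R[X] R[X]

@[simp]
theorem koszulDiff_apply (x : R[X] × R[X]) : koszulDiff q x = (q * x.2, 0) := rfl

theorem koszulDiff_comp_inl : koszulDiff q ∘ₗ inl R R[X] R[X] = 0 := by
  ext <;> simp

theorem koszulDiff_comp_koszulDiff : koszulDiff q ∘ₗ koszulDiff q = 0 := by
  ext <;> simp

variable {q}

theorem modByMonicHom_comp_fst_comp_koszulDiff (hq : q.Monic) :
    modByMonicHom q ∘ₗ fst R R[X] R[X] ∘ₗ koszulDiff q = 0 := by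
  ext <;> simp [self_mul_modByMonic hq]

noncomputable def koszulHomotopy (hq : q.Monic) : R[X] × R[X] →ₗ[R] R[X] × R[X] :=
  inr R R[X] R[X] ∘ₗ divByMonicHom hq ∘ₗ fst R R[X] R[X]

@[simp]
theorem koszulHomotopy_apply (hq : q.Monic) (x : R[X] × R[X]) :
    koszulHomotopy hq x = (0, x.1 /ₘ q) := rfl

theorem koszulHomotopy_comp_koszulHomotopy (hq : q.Monic) :
    koszulHomotopy hq ∘ₗ koszulHomotopy hq = 0 := by
  ext <;> simp

theorem fst_comp_koszulHomotopy (hq : q.Monic) :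
    fst R R[X] R[X] ∘ₗ koszulHomotopy hq = 0 := by
  ext <;> simp

theorem koszulHomotopy_comp_inl (hq : q.Monic) :
    koszulHomotopy hq ∘ₗ inl R R[X] R[X] = inr R R[X] R[X] ∘ₗ divByMonicHom hq := rfl

theorem id_sub_eq_koszulHomotopy_comp_add (hq : q.Monic) :
    LinearMap.id - inl R R[X] R[X] ∘ₗ modByMonicHom q ∘ₗ fst R R[X] R[X] =
      koszulHomotopy hq ∘ₗ koszulDiff q + koszulDiff q ∘ₗ koszulHomotopy hq := by
  refine LinearMap.ext fun x => Prod.ext ?_ ?_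
  · simp only [LinearMap.sub_apply, id_apply, comp_apply, LinearMap.add_apply, koszulDiff_apply,
      koszulHomotopy_apply, fst_apply, inl_apply, modByMonicHom_apply, Prod.fst_sub,
      Prod.fst_add, zero_add]
    linear_combination -modByMonic_add_div x.1 q
  · simp [mul_divByMonic_cancel_left _ hq]

end Koszul

/-- Eliminating a loop. Let `R0` be a commutative ring, `h ∈ R0`,
`R = R0[y]`, and `M = R × R` with basis `e = (1,0)`, `f = (0,1)` and differential
`d (α·e + β·f) = (y² − h)·β·e` (the factorization `K(0, y² − h)`). Then `d ∘ d = 0`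
and `(M, d)` admits a special deformation retract, as `R0`-modules, onto
`N = R0 × R0` with zero differential. -/
theorem stmt_10 (R0 : Type*) [CommRing R0] (h : R0)
    (d : (Polynomial R0 × Polynomial R0) →ₗ[R0] (Polynomial R0 × Polynomial R0))
    (hd : ∀ p : Polynomial R0 × Polynomial R0,
      d p = ((Polynomial.X ^ 2 - Polynomial.C h) * p.2, 0)) :
    d ∘ₗ d = 0 ∧
    ∃ (P : (Polynomial R0 × Polynomial R0) →ₗ[R0] (R0 × R0))
      (I : (R0 × R0) →ₗ[R0] (Polynomial R0 × Polynomial R0))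
      (H : (Polynomial R0 × Polynomial R0) →ₗ[R0] (Polynomial R0 × Polynomial R0)),
      P ∘ₗ d = 0 ∧
      d ∘ₗ I = 0 ∧
      P ∘ₗ I = LinearMap.id ∧
      LinearMap.id - I ∘ₗ P = H ∘ₗ d + d ∘ₗ H ∧
      P ∘ₗ H = 0 ∧
      H ∘ₗ I = 0 ∧
      H ∘ₗ H = 0 := by
  obtain rfl : d = koszulDiff (X ^ 2 - C h) :=
    LinearMap.ext fun p => (hd p).trans (koszulDiff_apply _ p).symm
  rcases subsingleton_or_nontrivial R0 with _ | _
  · exact ⟨Subsingleton.elim _ _, 0, 0, 0, Subsingleton.elim _ _, Subsingleton.elim _ _,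
      Subsingleton.elim _ _, Subsingleton.elim _ _, Subsingleton.elim _ _, Subsingleton.elim _ _,
      Subsingleton.elim _ _⟩
  have hq : (X ^ 2 - C h).Monic := monic_X_pow_sub_C h two_ne_zero
  have hq2 : (X ^ 2 - C h).degree = 2 := degree_X_pow_sub_C two_pos h
  refine ⟨koszulDiff_comp_koszulDiff _, coeffPair ∘ₗ modByMonicHom (X ^ 2 - C h) ∘ₗ fst R0 _ _,
    inl R0 _ _ ∘ₗ ofCoeffPair, koszulHomotopy hq, ?_, ?_, ?_, ?_, ?_, ?_,
    koszulHomotopy_comp_koszulHomotopy hq⟩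
  · simp only [LinearMap.comp_assoc, modByMonicHom_comp_fst_comp_koszulDiff hq,
      LinearMap.comp_zero]
  · rw [← LinearMap.comp_assoc, koszulDiff_comp_inl, LinearMap.zero_comp]
  · rw [LinearMap.comp_assoc, LinearMap.comp_assoc, ← LinearMap.comp_assoc ofCoeffPair,
      fst_comp_inl, LinearMap.id_comp, modByMonicHom_comp_ofCoeffPair hq hq2.ge,
      coeffPair_comp_ofCoeffPair]
  · rw [← id_sub_eq_koszulHomotopy_comp_add hq]
    conv_rhs => rw [← ofCoeffPair_comp_coeffPair_comp_modByMonicHom hq hq2.le]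
    rfl
  · simp only [LinearMap.comp_assoc, fst_comp_koszulHomotopy hq, LinearMap.comp_zero]
  · rw [← LinearMap.comp_assoc, koszulHomotopy_comp_inl, LinearMap.comp_assoc,
      divByMonicHom_comp_ofCoeffPair hq hq2.ge, LinearMap.comp_zero]
end

section
/- Let D : C →ₗ[R] C and D′ : C′ →ₗ[R] C′ be R-linear maps all of whose matrix entries (with respect to the standard bases) have zero constant term, i.e., lie in the kernel of ε. If f, g : C →ₗ[R] C′ are homotopic in the sense that f − g = H∘D + D′∘H for some R-linear H : C →ₗ[R] C′, then f and g have the same constant terms: applying ε entrywise to the matrix of f gives the same integer matrix as applying ε entrywise to the matrix of g. -/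
open MvPolynomial

/-- Let `R = MvPolynomial σ ℤ` and let `ε = constantCoeff` be the
constant-term homomorphism. Let `C = R^a` and `C' = R^b` be finite free `R`-modules
with their standard bases, and let `D : C →ₗ C` and `D' : C' →ₗ C'` have all matrix
entries with zero constant term. If `f, g : C →ₗ C'` satisfy
`f − g = H ∘ D + D' ∘ H` for some `R`-linear `H`, then the matrices of `f` and `g`
have the same constant terms entrywise. -/
theorem stmt_16 (σ : Type*) (a b : ℕ)
    (D : (Fin a → MvPolynomial σ ℤ) →ₗ[MvPolynomial σ ℤ] (Fin a → MvPolynomial σ ℤ))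
    (D' : (Fin b → MvPolynomial σ ℤ) →ₗ[MvPolynomial σ ℤ] (Fin b → MvPolynomial σ ℤ))
    (hD : ∀ (i j : Fin a), constantCoeff (D (Pi.single j 1) i) = 0)
    (hD' : ∀ (i j : Fin b), constantCoeff (D' (Pi.single j 1) i) = 0)
    (f g H : (Fin a → MvPolynomial σ ℤ) →ₗ[MvPolynomial σ ℤ] (Fin b → MvPolynomial σ ℤ))
    (hfg : f - g = H ∘ₗ D + D' ∘ₗ H) :
    ∀ (i : Fin b) (j : Fin a),
      constantCoeff (f (Pi.single j 1) i) = constantCoeff (g (Pi.single j 1) i) := by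
  intro i j
  have key := congrArg (fun F : (Fin a → MvPolynomial σ ℤ) →ₗ[MvPolynomial σ ℤ]
      (Fin b → MvPolynomial σ ℤ) => constantCoeff (F (Pi.single j 1) i)) hfg
  simp only [LinearMap.sub_apply, LinearMap.add_apply, LinearMap.comp_apply,
    Pi.sub_apply, Pi.add_apply, map_sub, map_add] at key
  have single_eq : ∀ (n : ℕ) (k : Fin n), (fun m => if k = m then 1 else 0) = Pi.single k (1 : MvPolynomial σ ℤ) := by
    intro n k; ext m; simp [Pi.single_apply, eq_comm]
  have h1 : constantCoeff (H (D (Pi.single j 1)) i) = 0 := by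
    rw [LinearMap.pi_apply_eq_sum_univ H (D (Pi.single j 1))]
    simp only [Finset.sum_apply, Pi.smul_apply, smul_eq_mul, map_sum, map_mul]
    exact Finset.sum_eq_zero fun k _ => by rw [single_eq a k] at *; rw [hD k j, zero_mul]
  have h2 : constantCoeff (D' (H (Pi.single j 1)) i) = 0 := by
    rw [LinearMap.pi_apply_eq_sum_univ D' (H (Pi.single j 1))]
    simp only [Finset.sum_apply, Pi.smul_apply, smul_eq_mul, map_sum, map_mul]
    exact Finset.sum_eq_zero fun k _ => by rw [single_eq b k] at *; rw [hD' i k, mul_zero]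
  rw [h1, h2, add_zero] at key
  linarith [key]
end
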